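/- Let g(x) with g(0)=1 satisfy g(x) = 1 + x·g(x)·B(x²g(x)), and define h(x) = s(x) + √(s(x)²+1) where s(x) = x·B(x²)/2. Then [xⁿ]h(x)^m = Σ over tuples (m_0,...,m_p) with Σ m_i(2i+1) = n (p = ⌊(n-1)/2⌋) of [p_q(m)/(m_0!···m_p!·2^q)]·b_0^{m_0}···b_p^{m_p}, where q = Σ m_i, p_1(m) = m, and p_q(m) = m·∏_{i=1}^{q-1}(m+q-2i) for q ≥ 2. -/

import Mathlib

open PowerSeries

/-- Substitution of the power series `g` (with zero constant term) into `f`. -/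
noncomputable def pscomp (f g : PowerSeries ℚ) : PowerSeries ℚ :=
  PowerSeries.mk fun N => ∑ n ∈ Finset.range (N + 1), coeff n f * coeff N (g ^ n)

open Finset

/-
Write `H(t) = t + √(1 + t²)`, so that `h = H(s)` and `h ^ m = (H ^ m)(s)`. The coefficients
`p_q(m) / q!` of `H ^ m` are pinned down by two facts: `H` itself solves the linear equation
`(1 + t²) H' = 1 + t H`, which forces `H² = 2 t H + 1` (the difference of the two sides solves a
homogeneous linear ODE and vanishes at `0`); and `H ^ (m + 2) = 2 t H ^ (m + 1) + H ^ m` is the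
recurrence `p_{q+1}(m+2) = p_{q+1}(m) + 2 (q+1) p_q(m+1)`. Finally `s = ∑ (b_i / 2) x^(2i+1)`, and
the multinomial theorem expands `[xⁿ] s^q` as a sum over the tuples of weight `n`.
-/

section PowerSeries

variable {R : Type*} [CommRing R]

theorem PowerSeries.eq_zero_of_derivative_eq_mul [IsAddTorsionFree R] {F G : R⟦X⟧}
    (hF : d⁄dX R F = G * F) (hF0 : constantCoeff F = 0) : F = 0 := by
  suffices ∀ n, coeff n F = 0 from ext fun n => by rw [this, map_zero]
  intro n
  induction n using Nat.strong_induction_on with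
  | _ n ih =>
    rcases n with _ | n
    · simpa using hF0
    · have h := congrArg (coeff n) hF
      rw [coeff_derivative, coeff_mul, sum_eq_zero fun p hp => by
        rw [ih p.2 (by linarith [mem_antidiagonal.1 hp]), mul_zero], ← Nat.cast_succ,
        ← nsmul_eq_mul'] at h
      exact (smul_eq_zero.1 h).resolve_left n.succ_ne_zero

theorem PowerSeries.coeff_subst_eq_sum_range {s : R⟦X⟧} (hs : constantCoeff s = 0) (F : R⟦X⟧)
    (n : ℕ) : coeff n (F.subst s) = ∑ q ∈ range (n + 1), coeff q F * coeff n (s ^ q) := by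
  rw [coeff_subst' (HasSubst.of_constantCoeff_zero' hs)]
  refine finsum_eq_sum_of_support_subset _ fun q hq => mem_range.2 (not_le.1 fun hnq => hq ?_)
  dsimp only
  rw [smul_eq_mul, coeff_of_lt_order n, mul_zero]
  exact lt_of_lt_of_le (by exact_mod_cast hnq)
    (le_order_pow_of_constantCoeff_eq_zero q hs)

theorem PowerSeries.coeff_pow_eq_of_coeff_eq {f g : R⟦X⟧} {n : ℕ}
    (h : ∀ d ≤ n, coeff d f = coeff d g) (q : ℕ) : coeff n (f ^ q) = coeff n (g ^ q) := by
  have htrunc : trunc (n + 1) f = trunc (n + 1) g := by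
    ext d
    simp only [coeff_trunc]
    split_ifs with hd
    · exact h d (Nat.le_of_lt_succ hd)
    · rfl
  calc coeff n (f ^ q)
      = (trunc (n + 1) (f ^ q)).coeff n := by rw [coeff_trunc, if_pos n.lt_succ_self]
    _ = (trunc (n + 1) (g ^ q)).coeff n := by rw [← trunc_trunc_pow, htrunc, trunc_trunc_pow]
    _ = coeff n (g ^ q) := by rw [coeff_trunc, if_pos n.lt_succ_self]

theorem PowerSeries.coeff_sum_C_mul_X_pow_pow {ι : Type*} [Fintype ι] [DecidableEq ι]
    (a : ι → R) (d : ι → ℕ) (n q : ℕ) :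
    coeff n ((∑ i, C (a i) * X ^ d i) ^ q) =
      ∑ f ∈ piAntidiag univ q with ∑ i, f i * d i = n,
        (Nat.multinomial univ f : R) * ∏ i, a i ^ f i := by
  rw [sum_pow_eq_sum_piAntidiag, map_sum, sum_filter]
  refine sum_congr rfl fun f _ => ?_
  have hprod : ∏ i, (C (a i) * X ^ d i) ^ f i = C (∏ i, a i ^ f i) * X ^ ∑ i, f i * d i := by
    simp only [mul_pow, prod_mul_distrib, ← pow_mul, prod_pow_eq_pow_sum, map_prod, map_pow,
      mul_comm (d _)]
  rw [hprod, ← map_natCast (C (R := R)), ← mul_assoc, ← map_mul, coeff_C_mul_X_pow]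
  exact if_congr eq_comm rfl rfl

end PowerSeries

theorem Finset.sum_range_sum_piAntidiag_filter {ι M : Type*} [Fintype ι] [DecidableEq ι]
    [AddCommMonoid M] {d : ι → ℕ} (hd : ∀ i, 0 < d i) (n : ℕ) (φ : ℕ → (ι → ℕ) → M) :
    ∑ q ∈ range (n + 1), ∑ f ∈ piAntidiag univ q with ∑ i, f i * d i = n, φ q f =
      ∑ f ∈ Fintype.piFinset (fun _ => range (n + 1)) with ∑ i, f i * d i = n, φ (∑ i, f i) f := by
  have hle (f : ι → ℕ) (j : ι) : f j ≤ ∑ i, f i * d i :=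
    (Nat.le_mul_of_pos_right _ (hd j)).trans
      (single_le_sum (f := fun i => f i * d i) (fun _ _ => Nat.zero_le _) (mem_univ j))
  have hsum (f : ι → ℕ) : ∑ i, f i ≤ ∑ i, f i * d i :=
    sum_le_sum fun i _ => Nat.le_mul_of_pos_right _ (hd i)
  rw [← sum_fiberwise_of_maps_to (g := fun f => ∑ i, f i) (t := range (n + 1))
    fun f hf => mem_range.2 (Nat.lt_succ_of_le ((hsum f).trans (mem_filter.1 hf).2.le))]
  refine sum_congr rfl fun q _ =>
    (sum_congr ?_ fun f hf => by rw [(mem_piAntidiag.1 (mem_filter.1 hf).1).1]).symm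
  ext f
  simp only [mem_filter, mem_piAntidiag, Fintype.mem_piFinset, mem_range, mem_univ]
  constructor
  · rintro ⟨⟨-, hw⟩, hq⟩
    exact ⟨⟨hq, fun _ _ => trivial⟩, hw⟩
  · rintro ⟨⟨hq, -⟩, hw⟩
    exact ⟨⟨fun j => Nat.lt_succ_of_le (hw ▸ hle f j), hw⟩, hq⟩

/-- The paper's `p_q(m) = m ∏_{i=1}^{q-1} (m + q - 2i)`, except that `p_0 = 1` rather than `m`. -/
noncomputable def pPoly : ℕ → ℚ → ℚ
  | 0, _ => 1
  | q + 1, m => m * ∏ i ∈ range q, (m + q - 1 - 2 * i)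

lemma pPoly_eq_mul_prod_Icc {q : ℕ} (hq : q ≠ 0) (m : ℚ) :
    pPoly q m = m * ∏ i ∈ Icc 1 (q - 1), (m + q - 2 * i) := by
  obtain ⟨r, rfl⟩ := Nat.exists_eq_add_one_of_ne_zero hq
  rw [pPoly, Nat.add_sub_cancel, ← Ico_add_one_right_eq_Icc, prod_Ico_eq_prod_range,
    Nat.add_sub_cancel]
  push_cast
  ring_nf

lemma pPoly_succ_add_two (q : ℕ) (m : ℚ) :
    pPoly (q + 1) (m + 2) = pPoly (q + 1) m + 2 * (q + 1) * pPoly q (m + 1) := by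
  rcases q with _ | r
  · simp [pPoly]
  · rw [pPoly, pPoly, pPoly, prod_range_succ', prod_range_succ]
    push_cast
    ring_nf

lemma pPoly_add_two (q : ℕ) (m : ℚ) : pPoly (q + 2) m = (m + q) * (m - q) * pPoly q m := by
  rcases q with _ | r
  · simp [pPoly]
  · rw [pPoly, pPoly, prod_range_succ', prod_range_succ]
    push_cast
    ring_nf

/-- `(t + √(1 + t²)) ^ m = exp (m arsinh t)`, given by its closed-form Taylor coefficients. -/
noncomputable def expMulArsinh (m : ℚ) : ℚ⟦X⟧ := mk fun q => pPoly q m / q.factorial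

lemma coeff_expMulArsinh (q : ℕ) (m : ℚ) :
    coeff q (expMulArsinh m) = pPoly q m / q.factorial := coeff_mk _ _

lemma expMulArsinh_zero : expMulArsinh 0 = 1 := by
  ext (_ | q) <;> simp [coeff_expMulArsinh, coeff_one, pPoly]

lemma expMulArsinh_add_two (m : ℚ) :
    expMulArsinh (m + 2) = 2 * X * expMulArsinh (m + 1) + expMulArsinh m := by
  ext (_ | q)
  · rw [map_add, mul_comm 2 X, mul_assoc, coeff_zero_X_mul, coeff_expMulArsinh,
      coeff_expMulArsinh]
    simp [pPoly]
  · rw [map_add, ← map_ofNat C, mul_comm (C _), mul_assoc, coeff_succ_X_mul, coeff_C_mul]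
    simp only [coeff_expMulArsinh, pPoly_succ_add_two, Nat.factorial_succ]
    push_cast
    field_simp
    ring

lemma one_add_X_sq_mul_derivative_expMulArsinh_one :
    (1 + X ^ 2) * d⁄dX ℚ (expMulArsinh 1) = 1 + X * expMulArsinh 1 := by
  ext (_ | q)
  · rw [add_mul, one_mul, map_add, map_add, coeff_zero_X_mul, coeff_X_pow_mul', coeff_derivative,
      coeff_expMulArsinh]
    simp [pPoly]
  · rw [add_mul, one_mul, map_add, map_add, coeff_succ_X_mul, coeff_X_pow_mul', coeff_one,
      if_neg q.succ_ne_zero, zero_add, coeff_derivative, coeff_expMulArsinh, coeff_expMulArsinh,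
      pPoly_add_two]
    rcases q with _ | q
    · norm_num [pPoly]
    · rw [if_pos (by omega), show q + 1 + 1 - 2 = q by omega, coeff_derivative,
        coeff_expMulArsinh]
      simp only [Nat.factorial_succ]
      push_cast
      field_simp
      ring

lemma expMulArsinh_one_sq : expMulArsinh 1 ^ 2 = 2 * X * expMulArsinh 1 + 1 := by
  set H := expMulArsinh 1
  have hode :
      (1 + X ^ 2) * d⁄dX ℚ (H ^ 2 - 2 * X * H - 1) = 2 * X * (H ^ 2 - 2 * X * H - 1) := by
    have h2 : d⁄dX ℚ (2 : ℚ⟦X⟧) = 0 := Derivation.map_natCast _ 2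
    simp only [map_sub, Derivation.leibniz_pow, Derivation.leibniz, derivative_X, smul_eq_mul,
      Derivation.map_one_eq_zero, h2]
    linear_combination (2 * H - 2 * X) * one_add_X_sq_mul_derivative_expMulArsinh_one
  have hunit : (1 + X ^ 2 : ℚ⟦X⟧)⁻¹ * (1 + X ^ 2) = 1 := PowerSeries.inv_mul_cancel _ (by simp)
  have hH0 : constantCoeff H = 1 := by
    rw [← coeff_zero_eq_constantCoeff_apply, coeff_expMulArsinh]
    simp [pPoly]
  have := eq_zero_of_derivative_eq_mul (F := H ^ 2 - 2 * X * H - 1)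
    (G := (1 + X ^ 2)⁻¹ * (2 * X)) (by
    rw [mul_assoc _ (2 * X), ← hode, ← mul_assoc, hunit, one_mul]) (by simp [hH0])
  linear_combination this

lemma expMulArsinh_one_pow (m : ℕ) : expMulArsinh 1 ^ m = expMulArsinh m := by
  induction m using Nat.twoStepInduction with
  | zero => rw [pow_zero, Nat.cast_zero, expMulArsinh_zero]
  | one => rw [pow_one, Nat.cast_one]
  | more n ih0 ih1 =>
    push_cast at ih1 ⊢
    rw [expMulArsinh_add_two, ← ih0, ← ih1]
    linear_combination expMulArsinh 1 ^ n * expMulArsinh_one_sq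

theorem pscomp_eq_subst {f g : ℚ⟦X⟧} (hg : constantCoeff g = 0) : pscomp f g = f.subst g :=
  ext fun n => by rw [pscomp, coeff_mk, coeff_subst_eq_sum_range hg]

section OddSeries

variable {B s : ℚ⟦X⟧}

lemma coeff_of_two_mul_eq_X_mul_pscomp (hs : 2 * s = X * pscomp B (X ^ 2)) (d : ℕ) :
    coeff d s = if Odd d then coeff (d / 2) B / 2 else 0 := by
  have h := congrArg (coeff d) hs
  rw [pscomp_eq_subst (by simp), ← map_ofNat C, coeff_C_mul] at h
  rcases d with _ | e
  · simpa using h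
  · rw [coeff_succ_X_mul, coeff_subst_X_pow two_ne_zero, Algebra.algebraMap_self,
      RingHom.id_apply] at h
    simp only [Nat.odd_add_one, Nat.not_odd_iff_even, even_iff_two_dvd]
    split_ifs at h ⊢ with he
    · rw [show (e + 1) / 2 = e / 2 by omega]
      linarith
    · linarith

lemma constantCoeff_of_two_mul_eq_X_mul_pscomp (hs : 2 * s = X * pscomp B (X ^ 2)) :
    constantCoeff s = 0 := by
  simpa using coeff_of_two_mul_eq_X_mul_pscomp hs 0

lemma coeff_eq_coeff_sum_of_two_mul_eq_X_mul_pscomp (hs : 2 * s = X * pscomp B (X ^ 2))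
    {n : ℕ} (d : ℕ) (hd : d ≤ n) :
    coeff d s = coeff d
      (∑ i : Fin ((n - 1) / 2 + 1), C (coeff (i : ℕ) B / 2) * X ^ (2 * (i : ℕ) + 1)) := by
  simp only [map_sum, coeff_C_mul_X_pow, coeff_of_two_mul_eq_X_mul_pscomp hs]
  split_ifs with hodd
  · obtain ⟨k, rfl⟩ := hodd
    have hk : k < (n - 1) / 2 + 1 := by omega
    have hne (i : Fin ((n - 1) / 2 + 1)) (hi : i ≠ ⟨k, hk⟩) : 2 * k + 1 ≠ 2 * (i : ℕ) + 1 :=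
      fun h => hi (Fin.ext (by simp only; omega))
    rw [Fintype.sum_eq_single ⟨k, hk⟩ fun i hi => if_neg (hne i hi), if_pos rfl, Fin.val_mk,
      show (2 * k + 1) / 2 = k by omega]
  · rw [sum_eq_zero fun (i : Fin ((n - 1) / 2 + 1)) _ => if_neg fun h => hodd ⟨i, h⟩]

end OddSeries

lemma eq_subst_expMulArsinh_one_of_sq_sub_eq {s h : ℚ⟦X⟧} (hs0 : constantCoeff s = 0)
    (hh : (h - s) ^ 2 = s ^ 2 + 1) (hh0 : constantCoeff (h - s) = 1) :
    h = (expMulArsinh 1).subst s := by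
  have ha := HasSubst.of_constantCoeff_zero' hs0
  set v := (expMulArsinh 1).subst s
  have hv : v ^ 2 = 2 * s * v + 1 := by
    have := congrArg (substAlgHom ha) expMulArsinh_one_sq
    rwa [map_pow, map_add, map_mul, map_mul, map_ofNat, map_one, substAlgHom_X,
      coe_substAlgHom] at this
  have hv0 : constantCoeff v = 1 := by
    rw [← coeff_zero_eq_constantCoeff_apply, coeff_subst_eq_sum_range hs0]
    simp [coeff_expMulArsinh, pPoly]
  have hh1 : constantCoeff h = 1 := by simpa [hs0] using hh0
  have hne : h + v - 2 * s ≠ 0 := fun h0 => by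
    have := congrArg constantCoeff h0
    norm_num [hh1, hv0, hs0] at this
  have hprod : (h - v) * (h + v - 2 * s) = 0 := by linear_combination hh - hv
  exact sub_eq_zero.1 ((mul_eq_zero.1 hprod).resolve_right hne)

theorem stmt_19_general (B s h : PowerSeries ℚ)
    (hs : (2 : PowerSeries ℚ) * s = X * pscomp B (X ^ 2))
    (hh : (h - s) ^ 2 = s ^ 2 + 1) (hh0 : constantCoeff (h - s) = 1) :
    ∀ n m : ℕ, 1 ≤ n → 1 ≤ m →
      coeff n (h ^ m) =
        ∑ f ∈ Finset.filter
            (fun f : Fin ((n - 1) / 2 + 1) → ℕ => ∑ i, f i * (2 * (i : ℕ) + 1) = n)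
            (Fintype.piFinset fun _ => Finset.range (n + 1)),
          (let q := ∑ i, f i
           ((m : ℚ) * ∏ i ∈ Finset.Icc 1 (q - 1), ((m : ℚ) + q - 2 * i)) /
             ((∏ i, ((f i).factorial : ℚ)) * 2 ^ q)) *
          ∏ i : Fin ((n - 1) / 2 + 1), (coeff (i : ℕ) B) ^ f i := by
  intro n m hn _
  have hs0 := constantCoeff_of_two_mul_eq_X_mul_pscomp hs
  rw [eq_subst_expMulArsinh_one_of_sq_sub_eq hs0 hh hh0,
    ← subst_pow (HasSubst.of_constantCoeff_zero' hs0), expMulArsinh_one_pow,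
    coeff_subst_eq_sum_range hs0]
  simp_rw [coeff_pow_eq_of_coeff_eq (coeff_eq_coeff_sum_of_two_mul_eq_X_mul_pscomp hs),
    coeff_sum_C_mul_X_pow_pow, coeff_expMulArsinh, mul_sum]
  rw [sum_range_sum_piAntidiag_filter (fun _ => Nat.succ_pos _)]
  refine sum_congr rfl fun f hf => ?_
  have hq : ∑ i, f i ≠ 0 := fun h0 => by
    rw [sum_eq_zero_iff] at h0
    simp [h0] at hf
    omega
  have hspec : (∏ i, ((f i).factorial : ℚ)) * Nat.multinomial univ f = (∑ i, f i).factorial :=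
    mod_cast Nat.multinomial_spec univ f
  have hM : (Nat.multinomial univ f : ℚ) ≠ 0 := Nat.cast_ne_zero.2 (Nat.multinomial_pos _ _).ne'
  rw [← pPoly_eq_mul_prod_Icc hq, ← hspec]
  simp only [div_pow, prod_div_distrib, prod_pow_eq_pow_sum]
  field_simp

theorem stmt_19 (B g s h : PowerSeries ℚ) (hg0 : constantCoeff g = 1)
    (hg : g = 1 + X * g * pscomp B (X ^ 2 * g))
    (hs : (2 : PowerSeries ℚ) * s = X * pscomp B (X ^ 2))
    (hh : (h - s) ^ 2 = s ^ 2 + 1) (hh0 : constantCoeff (h - s) = 1) :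
    ∀ n m : ℕ, 1 ≤ n → 1 ≤ m →
      coeff n (h ^ m) =
        ∑ f ∈ Finset.filter
            (fun f : Fin ((n - 1) / 2 + 1) → ℕ => ∑ i, f i * (2 * (i : ℕ) + 1) = n)
            (Fintype.piFinset fun _ => Finset.range (n + 1)),
          (let q := ∑ i, f i
           ((m : ℚ) * ∏ i ∈ Finset.Icc 1 (q - 1), ((m : ℚ) + q - 2 * i)) /
             ((∏ i, ((f i).factorial : ℚ)) * 2 ^ q)) *
          ∏ i : Fin ((n - 1) / 2 + 1), (coeff (i : ℕ) B) ^ f i :=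
  stmt_19_general B s h hs hh hh0
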